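/- For all integers k,n ≥ 1, there exists an involution Ψ : SYT(n^k) → SYT(n^k) (i.e. Ψ∘Ψ is the identity) such that for every T ∈ SYT(n^k), asc(T) + asc(Ψ(T)) = (k−1)(n−1). -/

import Mathlib

open Finset

/-- The set of cells of the Young diagram with row lengths `lam`
(rows and columns are 0-indexed). -/
def ydCells (lam : List ℕ) : Finset (ℕ × ℕ) :=
  (Finset.range lam.length).biUnion
    (fun r => (Finset.range (lam.getD r 0)).image (fun c => (r, c)))

/-- `lam` is a partition: a weakly decreasing list of positive integers. -/
def IsPartition (lam : List ℕ) : Prop :=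
  lam.Pairwise (· ≥ ·) ∧ ∀ x ∈ lam, 0 < x

/-- A standard Young tableau of shape `lam`: a filling of the cells of `lam` with the
numbers `1, …, lam.sum`, each used exactly once, increasing along rows and columns. -/
structure SYT (lam : List ℕ) where
  entry : ℕ × ℕ → ℕ
  zero_outside : ∀ p, p ∉ ydCells lam → entry p = 0
  bijOn : Set.BijOn entry (ydCells lam : Set (ℕ × ℕ)) (Set.Icc 1 lam.sum)
  row_incr : ∀ r c : ℕ, (r, c + 1) ∈ ydCells lam → entry (r, c) < entry (r, c + 1)
  col_incr : ∀ r c : ℕ, (r + 1, c) ∈ ydCells lam → entry (r, c) < entry (r + 1, c)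

open Classical in
/-- The descent set of a standard Young tableau: those `1 ≤ i ≤ N-1` such that the row of
`i` is strictly above (smaller index than) the row of `i+1`. -/
noncomputable def desSet (lam : List ℕ) (T : SYT lam) : Finset ℕ :=
  (Finset.Icc 1 (lam.sum - 1)).filter (fun i =>
    ∃ p ∈ ydCells lam, ∃ q ∈ ydCells lam,
      T.entry p = i ∧ T.entry q = i + 1 ∧ p.1 < q.1)

open Classical in
/-- The ascent set of a standard Young tableau: those `1 ≤ i ≤ N-1` such that the row of
`i` is strictly below (larger index than) the row of `i+1`. -/
noncomputable def ascSet (lam : List ℕ) (T : SYT lam) : Finset ℕ :=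
  (Finset.Icc 1 (lam.sum - 1)).filter (fun i =>
    ∃ p ∈ ydCells lam, ∃ q ∈ ydCells lam,
      T.entry p = i ∧ T.entry q = i + 1 ∧ q.1 < p.1)

open Classical in
/-- The high descent set: descents `i` such that moreover `i+1` lies strictly to the left
of `i`. -/
noncomputable def hdesSet (lam : List ℕ) (T : SYT lam) : Finset ℕ :=
  (Finset.Icc 1 (lam.sum - 1)).filter (fun i =>
    ∃ p ∈ ydCells lam, ∃ q ∈ ydCells lam,
      T.entry p = i ∧ T.entry q = i + 1 ∧ p.1 < q.1 ∧ q.2 < p.2)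

/-- The number of descents. -/
noncomputable def desNum (lam : List ℕ) (T : SYT lam) : ℕ := (desSet lam T).card

/-- The number of ascents. -/
noncomputable def ascNum (lam : List ℕ) (T : SYT lam) : ℕ := (ascSet lam T).card

/-- The number of high descents. -/
noncomputable def hdesNum (lam : List ℕ) (T : SYT lam) : ℕ := (hdesSet lam T).card

open Classical in
/-- `bounce lam T r s` is the number of `1 ≤ i ≤ N-1` such that `i` lies in (0-indexed)
row `r` and `i+1` lies in (0-indexed) row `s` of `T`. -/
noncomputable def bounce (lam : List ℕ) (T : SYT lam) (r s : ℕ) : ℕ :=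
  ((Finset.Icc 1 (lam.sum - 1)).filter (fun i =>
    ∃ p ∈ ydCells lam, ∃ q ∈ ydCells lam,
      T.entry p = i ∧ T.entry q = i + 1 ∧ p.1 = r ∧ q.1 = s)).card

/-!
Standardization, as in Stanley's theory of `P`-partitions. Listing the cells of a filling in
increasing order of their values, ties broken row by row, turns a weakly increasing filling of
`n^k` with values in `[1, t]` into a standard tableau `T` and a weakly increasing sequence
`a₁ ≤ ⋯ ≤ a_N` in `[1, t]` that increases strictly at the ascents of `T`; breaking ties in the
reverse order turns strictly increasing fillings into pairs whose sequence increases strictly at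
the `N - 1 - asc T` non-ascents. Removing the forced jumps, there are `∑_T H(t - asc T)` weak and
`∑_T H(u - (N - 1 - asc T))` strict fillings, `H(m)` being the number of weakly increasing
sequences in `[1, m]`. Subtracting `r + c` from the entry of cell `(r, c)` matches the strict
fillings with values in `[1, t + (k - 1) + (n - 1)]` with the weak ones with values in `[1, t]`,
so `∑_T H(t - asc T) = ∑_T H(t - ((k - 1)(n - 1) - asc T))` for every `t`. As `H(0) = 0` and
`H(1) = 1`, this triangular system forces `asc` and `(k - 1)(n - 1) - asc` to be equidistributed,
and matching up their fibres gives the involution.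
-/

section Fibers

variable {α : Type*} [Fintype α]

theorem sum_apply_sub_eq_sum_range {H : ℕ → ℕ} (h0 : H 0 = 0) (f : α → ℕ) (t : ℕ) :
    ∑ x, H (t - f x) = ∑ b ∈ range t, #{x | f x = b} * H (t - b) := by
  calc ∑ x, H (t - f x) = ∑ x, ∑ b ∈ range t, if f x = b then H (t - b) else 0 := by
        refine sum_congr rfl fun x _ => ?_
        simp only [sum_ite_eq, mem_range]
        split_ifs with hx
        · rfl
        · rw [Nat.sub_eq_zero_of_le (not_lt.mp hx), h0]
    _ = ∑ b ∈ range t, #{x | f x = b} * H (t - b) := by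
        rw [sum_comm]
        simp only [← sum_filter, sum_const, smul_eq_mul]

theorem card_fiber_eq_of_forall_sum_eq {H : ℕ → ℕ} (h0 : H 0 = 0) (h1 : H 1 = 1)
    {f g : α → ℕ} (h : ∀ t, ∑ x, H (t - f x) = ∑ x, H (t - g x)) (a : ℕ) :
    #{x | f x = a} = #{x | g x = a} := by
  induction a using Nat.strong_induction_on with
  | _ a ih =>
    have hsum := h (a + 1)
    rw [sum_apply_sub_eq_sum_range h0, sum_apply_sub_eq_sum_range h0, sum_range_succ,
      sum_range_succ, sum_congr rfl fun b hb => by rw [ih b (mem_range.mp hb)],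
      Nat.add_sub_cancel_left, h1, mul_one, mul_one] at hsum
    exact Nat.add_left_cancel hsum

theorem exists_involutive_add_eq {f : α → ℕ} {M : ℕ} (hf : ∀ x, f x ≤ M)
    (h : ∀ a, #{x | f x = a} = #{x | M - f x = a}) :
    ∃ ψ : α → α, Function.Involutive ψ ∧ ∀ x, f x + f (ψ x) = M := by
  let e : ∀ a, {x // f x = a} ≃ {x // M - f x = a} := fun a =>
    Fintype.equivOfCardEq (by rw [Fintype.card_subtype, Fintype.card_subtype, h a])
  obtain ⟨g, hg⟩ : ∃ g : α ≃ α, ∀ x, f (g x) = M - f x :=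
    ⟨Equiv.ofFiberEquiv e, fun x => by
      have := Equiv.ofFiberEquiv_map e x
      have := hf (Equiv.ofFiberEquiv e x)
      omega⟩
  have hg' : ∀ x, f (g.symm x) = M - f x := fun x => by
    have := hg (g.symm x)
    rw [Equiv.apply_symm_apply] at this
    have := hf (g.symm x)
    omega
  refine ⟨fun x => if 2 * f x < M then g x else if M < 2 * f x then g.symm x else x,
    fun x => ?_, fun x => ?_⟩
  · have := hf x
    by_cases h1 : 2 * f x < M
    · simp [h1, hg, show ¬ 2 * (M - f x) < M by omega, show M < 2 * (M - f x) by omega]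
    · by_cases h2 : M < 2 * f x
      · simp [h1, h2, hg', show 2 * (M - f x) < M by omega]
      · simp [h1, h2]
  · have := hf x
    dsimp only
    split_ifs
    · rw [hg]; omega
    · rw [hg']; omega
    · omega

end Fibers

section LexKey

variable {α β γ : Type*} [PartialOrder α] [PartialOrder β] [Preorder γ] {s : Set α}
  {σ : α → β} {τ : α → γ}

theorem strictMonoOn_toLex_iff_monotoneOn (hτ : StrictMonoOn τ s) :
    StrictMonoOn (fun p => toLex (σ p, τ p)) s ↔ MonotoneOn σ s := by
  refine ⟨fun h p hp q hq hpq => ?_, fun h p hp q hq hpq => ?_⟩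
  · rcases hpq.lt_or_eq with hlt | rfl
    · exact (Prod.Lex.toLex_lt_toLex'.mp (h hp hq hlt)).1
    · exact le_rfl
  · exact Prod.Lex.toLex_lt_toLex'.mpr ⟨h hp hq hpq.le, fun _ => hτ hp hq hpq⟩

theorem strictMonoOn_toLex_iff_strictMonoOn (hτ : AntitoneOn τ s) :
    StrictMonoOn (fun p => toLex (σ p, τ p)) s ↔ StrictMonoOn σ s := by
  refine ⟨fun h p hp q hq hpq => ?_, fun h p hp q hq hpq => ?_⟩
  · obtain ⟨hle, htie⟩ := Prod.Lex.toLex_lt_toLex'.mp (h hp hq hpq)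
    exact hle.lt_of_ne fun heq => (htie heq).not_ge (hτ hp hq hpq.le)
  · exact Prod.Lex.toLex_lt_toLex'.mpr ⟨(h hp hq hpq).le, fun heq => absurd heq (h hp hq hpq).ne⟩

end LexKey

theorem mem_Icc_of_mem_Icc_sub_one {N i : ℕ} (hi : i ∈ Icc 1 (N - 1)) :
    i ∈ Set.Icc 1 N ∧ i + 1 ∈ Set.Icc 1 N := by
  simp only [mem_Icc] at hi
  exact ⟨⟨hi.1, by omega⟩, by omega, by omega⟩

theorem card_filter_lt_add_one (S : Finset ℕ) (i : ℕ) :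
    #{s ∈ S | s < i + 1} = #{s ∈ S | s < i} + if i ∈ S then 1 else 0 := by
  simp only [card_filter]
  rw [← sum_ite_eq' S i (fun _ => 1), ← sum_add_distrib]
  refine sum_congr rfl fun s _ => ?_
  split_ifs <;> omega

structure IsMonoSeq (N t : ℕ) (S : Finset ℕ) (a : ℕ → ℕ) : Prop where
  eq_zero : ∀ i ∉ Set.Icc 1 N, a i = 0
  apply_mem : ∀ i ∈ Set.Icc 1 N, a i ∈ Set.Icc 1 t
  le_succ : ∀ i, 1 ≤ i → i + 1 ≤ N → a i ≤ a (i + 1)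
  lt_succ : ∀ i ∈ S, a i < a (i + 1)

namespace IsMonoSeq

variable {N t : ℕ} {S : Finset ℕ} {a : ℕ → ℕ}

theorem step_le (h : IsMonoSeq N t S a) {i : ℕ} (hi : 1 ≤ i) (hiN : i + 1 ≤ N) :
    a i + (if i ∈ S then 1 else 0) ≤ a (i + 1) := by
  split_ifs with hiS
  · exact h.lt_succ i hiS
  · simpa using h.le_succ i hi hiN

theorem card_lt_add_one_le (h : IsMonoSeq N t S a) (hS : S ⊆ Icc 1 (N - 1)) :
    ∀ i ∈ Set.Icc 1 N, #{s ∈ S | s < i} + 1 ≤ a i := by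
  intro i ⟨hi1, hiN⟩
  induction i, hi1 using Nat.le_induction with
  | base =>
    have : #{s ∈ S | s < 1} = 0 :=
      card_eq_zero.mpr (filter_eq_empty_iff.mpr fun s hs => by
        have := mem_Icc.mp (hS hs); omega)
    rw [this]
    exact (h.apply_mem 1 ⟨le_rfl, hiN⟩).1
  | succ i hi ih =>
    have := h.step_le hi hiN
    rw [card_filter_lt_add_one]
    have := ih (by omega)
    omega

theorem le_add_card_lt (h : IsMonoSeq N t S a) (hS : S ⊆ Icc 1 (N - 1)) :
    ∀ i ∈ Set.Icc 1 N, a i + #S ≤ t + #{s ∈ S | s < i} := by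
  intro i ⟨hi1, hiN⟩
  induction hd : N - i generalizing i with
  | zero =>
    have : #{s ∈ S | s < i} = #S :=
      congrArg card (filter_true_of_mem fun s hs => by
        have := mem_Icc.mp (hS hs); omega)
    have := (h.apply_mem i ⟨hi1, hiN⟩).2
    omega
  | succ d ih =>
    have := ih (i + 1) (by omega) (by omega) (by omega)
    have := h.step_le hi1 (by omega)
    rw [card_filter_lt_add_one] at *
    omega

theorem ext_iff_on {a b : ℕ → ℕ} (ha : IsMonoSeq N t S a) (hb : IsMonoSeq N t S b) :
    a = b ↔ ∀ i ∈ Set.Icc 1 N, a i = b i := by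
  refine ⟨fun h _ _ => h ▸ rfl, fun h => funext fun i => ?_⟩
  by_cases hi : i ∈ Set.Icc 1 N
  · exact h i hi
  · rw [ha.eq_zero i hi, hb.eq_zero i hi]

instance : Finite {a // IsMonoSeq N t S a} :=
  Finite.of_injective (fun a (i : Fin (N + 1)) => (⟨min (a.1 i) t, by omega⟩ : Fin (t + 1)))
    fun a b h => Subtype.ext <| (a.2.ext_iff_on b.2).mpr fun i hi => by
      have hab := congrArg Fin.val (congrFun h ⟨i, Nat.lt_succ_of_le hi.2⟩)
      have := (a.2.apply_mem i hi).2
      have := (b.2.apply_mem i hi).2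
      simp only at hab
      omega

theorem sub_card_lt (h : IsMonoSeq N t S a) (hS : S ⊆ Icc 1 (N - 1)) :
    IsMonoSeq N (t - #S) ∅
      (fun i => if i ∈ Set.Icc 1 N then a i - #{s ∈ S | s < i} else 0) := by
  refine ⟨fun i hi => if_neg hi, fun i hi => ?_, fun i hi hiN => ?_, by simp⟩
  · have := h.card_lt_add_one_le hS i hi
    have := h.le_add_card_lt hS i hi
    rw [if_pos hi]
    constructor <;> omega
  · have := h.card_lt_add_one_le hS i ⟨hi, by omega⟩
    have := h.step_le hi hiN
    rw [if_pos ⟨hi, by omega⟩, if_pos ⟨by omega, hiN⟩, card_filter_lt_add_one]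
    omega

theorem add_card_lt (h : IsMonoSeq N (t - #S) ∅ a) (hS : S ⊆ Icc 1 (N - 1)) :
    IsMonoSeq N t S (fun i => if i ∈ Set.Icc 1 N then a i + #{s ∈ S | s < i} else 0) := by
  refine ⟨fun i hi => if_neg hi, fun i hi => ?_, fun i hi hiN => ?_, fun i hiS => ?_⟩
  · obtain ⟨h1, h2⟩ := h.apply_mem i hi
    have : #{s ∈ S | s < i} ≤ #S := card_filter_le _ _
    rw [if_pos hi]
    constructor <;> omega
  · have := h.le_succ i hi hiN
    rw [if_pos ⟨hi, by omega⟩, if_pos ⟨by omega, hiN⟩, card_filter_lt_add_one]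
    omega
  · have hi := mem_Icc.mp (hS hiS)
    have := h.le_succ i hi.1 (by omega)
    rw [if_pos ⟨hi.1, by omega⟩, if_pos ⟨by omega, by omega⟩, card_filter_lt_add_one, if_pos hiS]
    omega

noncomputable def stripEquiv (hS : S ⊆ Icc 1 (N - 1)) (t : ℕ) :
    {a // IsMonoSeq N t S a} ≃ {b // IsMonoSeq N (t - #S) ∅ b} where
  toFun a := ⟨_, a.2.sub_card_lt hS⟩
  invFun b := ⟨_, b.2.add_card_lt hS⟩
  left_inv a := Subtype.ext <| ((a.2.sub_card_lt hS).add_card_lt hS).ext_iff_on a.2 |>.mpr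
    fun i hi => by
      have := a.2.card_lt_add_one_le hS i hi
      rw [if_pos hi, if_pos hi]
      omega
  right_inv b := Subtype.ext <| ((b.2.add_card_lt hS).sub_card_lt hS).ext_iff_on b.2 |>.mpr
    fun i hi => by
      rw [if_pos hi, if_pos hi, Nat.add_sub_cancel]

end IsMonoSeq

noncomputable def monoSeqCount (N m : ℕ) : ℕ := Nat.card {a // IsMonoSeq N m ∅ a}

theorem card_isMonoSeq {N : ℕ} {S : Finset ℕ} (hS : S ⊆ Icc 1 (N - 1)) (t : ℕ) :
    Nat.card {a // IsMonoSeq N t S a} = monoSeqCount N (t - #S) :=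
  Nat.card_congr (IsMonoSeq.stripEquiv hS t)

theorem monoSeqCount_zero {N : ℕ} (hN : 1 ≤ N) : monoSeqCount N 0 = 0 := by
  refine Nat.card_eq_zero.mpr (Or.inl ⟨fun a => ?_⟩)
  have := a.2.apply_mem 1 ⟨le_rfl, hN⟩
  exact absurd (this.1.trans this.2) (by decide)

theorem monoSeqCount_one (N : ℕ) : monoSeqCount N 1 = 1 := by
  have hone : IsMonoSeq N 1 ∅ (fun i => if i ∈ Set.Icc 1 N then 1 else 0) :=
    ⟨fun i hi => if_neg hi, fun i hi => by simp [hi], fun i hi hiN => by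
      rw [if_pos ⟨hi, by omega⟩, if_pos ⟨by omega, hiN⟩], by simp⟩
  refine Nat.card_eq_one_iff_exists.mpr ⟨⟨_, hone⟩, fun a => Subtype.ext ?_⟩
  exact (a.2.ext_iff_on hone).mpr fun i hi => by
    obtain ⟨h1, h2⟩ := a.2.apply_mem i hi
    rw [if_pos hi]
    omega

theorem card_ydCells (lam : List ℕ) : (ydCells lam).card = lam.sum := by
  rw [ydCells, card_biUnion]
  · simp_rw [card_image_of_injective _ (Prod.mk_right_injective _), card_range,
      Finset.sum_range, ← Fin.sum_univ_getElem]
    refine Finset.sum_congr rfl fun r _ => ?_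
    simp [List.getD_eq_getElem?_getD, r.2]
  · intro r _ r' _ hrr'
    simp only [Function.onFun, disjoint_left, mem_image]
    rintro _ ⟨c, -, rfl⟩ ⟨c', -, h⟩
    exact hrr' (congrArg Prod.fst h).symm

theorem ydCells_replicate (k n : ℕ) :
    ydCells (List.replicate k n) = range k ×ˢ range n := by
  ext ⟨r, c⟩
  simp only [ydCells, mem_biUnion, mem_range, mem_image, mem_product, List.length_replicate]
  constructor
  · rintro ⟨r, hr, c, hc, h⟩
    simp_all [List.getD_eq_getElem?_getD]
  · rintro ⟨hr, hc⟩
    exact ⟨r, hr, c, by simpa [List.getD_eq_getElem?_getD, hr] using hc, rfl⟩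

theorem isLowerSet_ydCells_replicate (k n : ℕ) :
    IsLowerSet (ydCells (List.replicate k n) : Set (ℕ × ℕ)) := by
  intro p q hqp hp
  simp only [ydCells_replicate, coe_product, coe_range, Set.mem_prod, Set.mem_Iio] at hp ⊢
  exact ⟨lt_of_le_of_lt hqp.1 hp.1, lt_of_le_of_lt hqp.2 hp.2⟩

namespace SYT

variable {lam : List ℕ}

theorem ext {T S : SYT lam} (h : T.entry = S.entry) : T = S := by
  cases T; cases S; simpa using h

theorem entry_mem (T : SYT lam) {p : ℕ × ℕ} (hp : p ∈ ydCells lam) :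
    T.entry p ∈ Set.Icc 1 lam.sum :=
  T.bijOn.mapsTo hp

noncomputable def cellOf (T : SYT lam) (i : ℕ) : ℕ × ℕ :=
  Function.invFunOn T.entry (ydCells lam) i

theorem cellOf_mem (T : SYT lam) {i : ℕ} (hi : i ∈ Set.Icc 1 lam.sum) :
    T.cellOf i ∈ ydCells lam :=
  Function.invFunOn_mem (T.bijOn.surjOn hi)

theorem entry_cellOf (T : SYT lam) {i : ℕ} (hi : i ∈ Set.Icc 1 lam.sum) :
    T.entry (T.cellOf i) = i :=
  Function.invFunOn_eq (T.bijOn.surjOn hi)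

theorem cellOf_entry (T : SYT lam) {p : ℕ × ℕ} (hp : p ∈ ydCells lam) :
    T.cellOf (T.entry p) = p :=
  T.bijOn.injOn.leftInvOn_invFunOn hp

theorem cellOf_injOn (T : SYT lam) : Set.InjOn T.cellOf (Set.Icc 1 lam.sum) :=
  fun i hi j hj h => by rw [← T.entry_cellOf hi, h, T.entry_cellOf hj]

theorem strictMonoOn_entry (hlam : IsLowerSet (ydCells lam : Set (ℕ × ℕ))) (T : SYT lam) :
    StrictMonoOn T.entry (ydCells lam) := by
  refine MonotoneOn.strictMonoOn_of_injOn ?_ T.bijOn.injOn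
  intro p hp q hq hpq
  have hrow : MonotoneOn (fun c => T.entry (p.1, c)) {c | (p.1, c) ∈ ydCells lam} :=
    monotoneOn_of_le_add_one
      (hlam.preimage (f := fun c => (p.1, c)) fun _ _ h => ⟨le_rfl, h⟩).ordConnected
      fun c _ _ hc => (T.row_incr _ _ hc).le
  have hcol : MonotoneOn (fun r => T.entry (r, q.2)) {r | (r, q.2) ∈ ydCells lam} :=
    monotoneOn_of_le_add_one
      (hlam.preimage (f := fun r => (r, q.2)) fun _ _ h => ⟨h, le_rfl⟩).ordConnected
      fun r _ _ hr => (T.col_incr _ _ hr).le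
  have hcorner : (p.1, q.2) ∈ ydCells lam := hlam ⟨hpq.1, le_rfl⟩ hq
  calc T.entry p ≤ T.entry (p.1, q.2) := hrow hp hcorner hpq.2
    _ ≤ T.entry q := hcol hcorner hq hpq.1

instance : Finite (SYT lam) :=
  Finite.of_injective
    (fun T (p : ydCells lam) => (⟨T.entry p, Nat.lt_succ_of_le (T.entry_mem p.2).2⟩ :
      Fin (lam.sum + 1)))
    fun T S h => ext <| funext fun p => by
      by_cases hp : p ∈ ydCells lam
      · simpa using congrFun h ⟨p, hp⟩
      · rw [T.zero_outside p hp, S.zero_outside p hp]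

noncomputable instance : Fintype (SYT lam) := Fintype.ofFinite _

theorem entry_eq_card (T : SYT lam) {p : ℕ × ℕ} (hp : p ∈ ydCells lam) :
    T.entry p = #{q ∈ ydCells lam | T.entry q ≤ T.entry p} := by
  have hcard : #{q ∈ ydCells lam | T.entry q ≤ T.entry p} = #(Icc 1 (T.entry p)) := by
    refine card_nbij T.entry (fun q hq => ?_)
      (T.bijOn.injOn.mono fun q hq => (mem_filter.mp hq).1) fun i hi => ?_
    · obtain ⟨hq, hle⟩ := mem_filter.mp hq
      simpa using ⟨(T.entry_mem hq).1, hle⟩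
    · simp only [coe_Icc, Set.mem_Icc] at hi
      have hi' : i ∈ Set.Icc 1 lam.sum := ⟨hi.1, hi.2.trans (T.entry_mem hp).2⟩
      exact ⟨T.cellOf i, by simp [T.cellOf_mem hi', T.entry_cellOf hi', hi.2],
        T.entry_cellOf hi'⟩
  rw [hcard, Nat.card_Icc, Nat.add_sub_cancel]

theorem eq_of_le_iff {T S : SYT lam}
    (h : ∀ p ∈ ydCells lam, ∀ q ∈ ydCells lam, T.entry q ≤ T.entry p ↔ S.entry q ≤ S.entry p) :
    T = S := by
  refine ext (funext fun p => ?_)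
  by_cases hp : p ∈ ydCells lam
  · rw [T.entry_eq_card hp, S.entry_eq_card hp]
    exact congrArg card (filter_congr fun q hq => h p hp q hq)
  · rw [T.zero_outside p hp, S.zero_outside p hp]

section OfKey

variable {β : Type*} [LinearOrder β] {K : ℕ × ℕ → β}

noncomputable def keyRank (lam : List ℕ) (K : ℕ × ℕ → β) (p : ℕ × ℕ) : ℕ :=
  if p ∈ ydCells lam then #{q ∈ ydCells lam | K q ≤ K p} else 0

theorem keyRank_mem {p : ℕ × ℕ} (hp : p ∈ ydCells lam) :
    keyRank lam K p ∈ Set.Icc 1 lam.sum := by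
  rw [keyRank, if_pos hp, ← card_ydCells]
  exact ⟨card_pos.mpr ⟨p, mem_filter.mpr ⟨hp, le_rfl⟩⟩, card_filter_le _ _⟩

theorem keyRank_lt {p q : ℕ × ℕ} (hq : q ∈ ydCells lam)
    (h : p ∈ ydCells lam → K p < K q) : keyRank lam K p < keyRank lam K q := by
  rw [keyRank, keyRank, if_pos hq]
  split_ifs with hp
  · refine card_lt_card ((ssubset_iff_of_subset fun x hx => ?_).mpr
      ⟨q, mem_filter.mpr ⟨hq, le_rfl⟩, fun h' => (h hp).not_ge (mem_filter.mp h').2⟩)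
    exact mem_filter.mpr ⟨(mem_filter.mp hx).1, (mem_filter.mp hx).2.trans (h hp).le⟩
  · exact card_pos.mpr ⟨q, mem_filter.mpr ⟨hq, le_rfl⟩⟩

theorem keyRank_lt_iff (hK : Set.InjOn K (ydCells lam)) {p q : ℕ × ℕ}
    (hp : p ∈ ydCells lam) (hq : q ∈ ydCells lam) :
    keyRank lam K p < keyRank lam K q ↔ K p < K q := by
  refine ⟨fun h => lt_of_not_ge fun hle => ?_, fun h => keyRank_lt hq fun _ => h⟩
  rcases hle.lt_or_eq with hlt | heq
  · exact (keyRank_lt hp fun _ => hlt).not_gt h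
  · exact h.ne (by rw [hK hp hq heq.symm])

theorem keyRank_bijOn (hK : Set.InjOn K (ydCells lam)) :
    Set.BijOn (keyRank lam K) (ydCells lam) (Set.Icc 1 lam.sum) := by
  have hmaps : Set.MapsTo (keyRank lam K) (ydCells lam) (Icc 1 lam.sum : Finset ℕ) :=
    fun p hp => by simpa using keyRank_mem (K := K) hp
  have hinj : Set.InjOn (keyRank lam K) (ydCells lam) := fun p hp q hq h => by
    by_contra hne
    rcases lt_or_gt_of_ne (hK.ne hp hq hne) with hlt | hlt
    · exact ((keyRank_lt_iff hK hp hq).mpr hlt).ne h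
    · exact ((keyRank_lt_iff hK hq hp).mpr hlt).ne' h
  rw [← coe_Icc]
  exact ⟨hmaps, hinj, surjOn_of_injOn_of_card_le _ hmaps hinj (by simp [card_ydCells])⟩

noncomputable def ofKey (K : ℕ × ℕ → β) (hinj : Set.InjOn K (ydCells lam))
    (hmono : StrictMonoOn K (ydCells lam)) : SYT lam where
  entry := keyRank lam K
  zero_outside _ hp := if_neg hp
  bijOn := keyRank_bijOn hinj
  row_incr _ c h :=
    keyRank_lt h fun h' => hmono h' h (Prod.mk_lt_mk_of_le_of_lt le_rfl c.lt_succ_self)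
  col_incr r _ h :=
    keyRank_lt h fun h' => hmono h' h (Prod.mk_lt_mk_of_lt_of_le r.lt_succ_self le_rfl)

theorem ofKey_eq {T : SYT lam} (hinj : Set.InjOn K (ydCells lam))
    (hmono : StrictMonoOn K (ydCells lam))
    (h : ∀ p ∈ ydCells lam, ∀ q ∈ ydCells lam, K p < K q ↔ T.entry p < T.entry q) :
    ofKey K hinj hmono = T :=
  eq_of_le_iff fun p hp q hq => by
    rw [← not_lt, ← not_lt, ofKey, keyRank_lt_iff hinj hp hq, h p hp q hq]

end OfKey

theorem mem_ascSet_iff (T : SYT lam) {i : ℕ} :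
    i ∈ ascSet lam T ↔ i ∈ Icc 1 (lam.sum - 1) ∧ (T.cellOf (i + 1)).1 < (T.cellOf i).1 := by
  rw [ascSet, mem_filter, and_congr_right_iff]
  intro hi
  obtain ⟨hi', hi1⟩ := mem_Icc_of_mem_Icc_sub_one hi
  constructor
  · rintro ⟨p, hp, q, hq, rfl, hqi, hlt⟩
    rwa [← hqi, T.cellOf_entry hp, T.cellOf_entry hq]
  · exact fun h => ⟨_, T.cellOf_mem hi', _, T.cellOf_mem hi1, T.entry_cellOf hi',
      T.entry_cellOf hi1, h⟩

theorem ascSet_subset (T : SYT lam) : ascSet lam T ⊆ Icc 1 (lam.sum - 1) :=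
  filter_subset _ _

theorem toLex_lt_iff_of_entry_lt (hlam : IsLowerSet (ydCells lam : Set (ℕ × ℕ)))
    (T : SYT lam) {p q : ℕ × ℕ} (hp : p ∈ ydCells lam) (hq : q ∈ ydCells lam)
    (h : T.entry p < T.entry q) : toLex q < toLex p ↔ q.1 < p.1 := by
  refine ⟨fun hlex => ?_, fun hlt => Prod.Lex.toLex_lt_toLex.mpr (Or.inl hlt)⟩
  rcases Prod.Lex.toLex_lt_toLex.mp hlex with hlt | ⟨hrow, hcol⟩
  · exact hlt
  · have hqp : q < p := Prod.mk_lt_mk_of_le_of_lt hrow.le hcol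
    exact absurd (T.strictMonoOn_entry hlam hq hp hqp) h.not_gt

variable {γ : Type*} [LinearOrder γ]

/-- Where `τ` drops from the cell of `i` to that of `i + 1`, a filling that standardizes to `T`
must increase strictly. -/
noncomputable def drops (T : SYT lam) (τ : ℕ × ℕ → γ) : Finset ℕ :=
  {i ∈ Icc 1 (lam.sum - 1) | τ (T.cellOf (i + 1)) < τ (T.cellOf i)}

theorem drops_subset (T : SYT lam) (τ : ℕ × ℕ → γ) : T.drops τ ⊆ Icc 1 (lam.sum - 1) :=
  filter_subset _ _

theorem toLex_cellOf_lt_iff (hlam : IsLowerSet (ydCells lam : Set (ℕ × ℕ))) (T : SYT lam)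
    {i : ℕ} (hi : i ∈ Icc 1 (lam.sum - 1)) :
    toLex (T.cellOf (i + 1)) < toLex (T.cellOf i) ↔ i ∈ ascSet lam T := by
  obtain ⟨hi', hi1⟩ := mem_Icc_of_mem_Icc_sub_one hi
  rw [T.mem_ascSet_iff, T.toLex_lt_iff_of_entry_lt hlam (T.cellOf_mem hi') (T.cellOf_mem hi1)
    (by rw [T.entry_cellOf hi', T.entry_cellOf hi1]; exact i.lt_succ_self)]
  exact (and_iff_right hi).symm

theorem drops_toLex (hlam : IsLowerSet (ydCells lam : Set (ℕ × ℕ))) (T : SYT lam) :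
    T.drops toLex = ascSet lam T := by
  ext i
  by_cases hi : i ∈ Icc 1 (lam.sum - 1)
  · rw [drops, mem_filter, T.toLex_cellOf_lt_iff hlam hi, and_iff_right hi]
  · exact iff_of_false (fun h => hi (mem_filter.mp h).1) fun h => hi (T.mem_ascSet_iff.mp h).1

theorem drops_toDual_toLex (hlam : IsLowerSet (ydCells lam : Set (ℕ × ℕ))) (T : SYT lam) :
    T.drops (fun p => OrderDual.toDual (toLex p)) = Icc 1 (lam.sum - 1) \ ascSet lam T := by
  ext i
  rw [drops, mem_filter, mem_sdiff, and_congr_right_iff]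
  intro hi
  obtain ⟨hi', hi1⟩ := mem_Icc_of_mem_Icc_sub_one hi
  have hne : T.cellOf i ≠ T.cellOf (i + 1) := T.cellOf_injOn.ne hi' hi1 (by omega)
  rw [OrderDual.toDual_lt_toDual, ← T.toLex_cellOf_lt_iff hlam hi, ← not_le,
    le_iff_lt_or_eq, or_iff_left (fun h => hne (toLex.injective h).symm)]

theorem snd_cellOf_lt_of_mem_ascSet
    (hlam : IsLowerSet (ydCells lam : Set (ℕ × ℕ))) (T : SYT lam) {i : ℕ}
    (hi : i ∈ ascSet lam T) : (T.cellOf i).2 < (T.cellOf (i + 1)).2 := by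
  obtain ⟨hiI, hrow⟩ := T.mem_ascSet_iff.mp hi
  obtain ⟨hi', hi1⟩ := mem_Icc_of_mem_Icc_sub_one hiI
  by_contra! hcol
  have hlt := T.strictMonoOn_entry hlam (T.cellOf_mem hi1) (T.cellOf_mem hi')
    (Prod.mk_lt_mk_of_lt_of_le hrow hcol)
  rw [T.entry_cellOf hi', T.entry_cellOf hi1] at hlt
  omega

end SYT

section Standardization

variable {lam : List ℕ} {γ : Type*} {τ : ℕ × ℕ → γ} {t : ℕ}

structure IsFilling (lam : List ℕ) (t : ℕ) (σ : ℕ × ℕ → ℕ) : Prop where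
  eq_zero : ∀ p ∉ ydCells lam, σ p = 0
  apply_mem : ∀ p ∈ ydCells lam, σ p ∈ Set.Icc 1 t

def lexKey (σ : ℕ × ℕ → ℕ) (τ : ℕ × ℕ → γ) (p : ℕ × ℕ) : ℕ ×ₗ γ := toLex (σ p, τ p)

theorem lexKey_injective (σ : ℕ × ℕ → ℕ) (hτ : Function.Injective τ) :
    Function.Injective (lexKey σ τ) :=
  fun _ _ h => hτ (congrArg Prod.snd (toLex.injective h))

variable [LinearOrder γ]

namespace SYT

noncomputable def standardize (hτ : Function.Injective τ) {σ : ℕ × ℕ → ℕ}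
    (hmono : StrictMonoOn (lexKey σ τ) (ydCells lam)) : SYT lam :=
  ofKey (lexKey σ τ) (lexKey_injective σ hτ).injOn hmono

noncomputable def seqOf (T : SYT lam) (σ : ℕ × ℕ → ℕ) (i : ℕ) : ℕ :=
  if i ∈ Set.Icc 1 lam.sum then σ (T.cellOf i) else 0

theorem isMonoSeq_seqOf (hτ : Function.Injective τ) {σ : ℕ × ℕ → ℕ}
    (hσ : IsFilling lam t σ) (hmono : StrictMonoOn (lexKey σ τ) (ydCells lam)) :
    IsMonoSeq lam.sum t ((standardize hτ hmono).drops τ) ((standardize hτ hmono).seqOf σ) := by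
  set T := standardize hτ hmono
  have hstep : ∀ i, i ∈ Set.Icc 1 lam.sum → i + 1 ∈ Set.Icc 1 lam.sum →
      lexKey σ τ (T.cellOf i) < lexKey σ τ (T.cellOf (i + 1)) := fun i hi hi1 => by
    rw [← keyRank_lt_iff (lexKey_injective σ hτ).injOn (T.cellOf_mem hi) (T.cellOf_mem hi1)]
    change T.entry _ < T.entry _
    rw [T.entry_cellOf hi, T.entry_cellOf hi1]
    exact i.lt_succ_self
  refine ⟨fun i hi => if_neg hi, fun i hi => ?_, fun i hi hiN => ?_, fun i hi => ?_⟩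
  · rw [seqOf, if_pos hi]
    exact hσ.apply_mem _ (T.cellOf_mem hi)
  · have hi' : i ∈ Set.Icc 1 lam.sum := ⟨hi, by omega⟩
    have hi1 : i + 1 ∈ Set.Icc 1 lam.sum := ⟨by omega, hiN⟩
    rw [seqOf, seqOf, if_pos hi', if_pos hi1]
    exact (Prod.Lex.toLex_lt_toLex'.mp (hstep i hi' hi1)).1
  · obtain ⟨hi, hdrop⟩ := mem_filter.mp hi
    obtain ⟨hi', hi1⟩ := mem_Icc_of_mem_Icc_sub_one hi
    rw [seqOf, seqOf, if_pos hi', if_pos hi1]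
    obtain ⟨hle, htie⟩ := Prod.Lex.toLex_lt_toLex'.mp (hstep i hi' hi1)
    exact hle.lt_of_ne fun h => (htie h).not_gt hdrop

theorem strictMonoOn_lexKey_cellOf (hτ : Function.Injective τ) (T : SYT lam) {a : ℕ → ℕ}
    (ha : IsMonoSeq lam.sum t (T.drops τ) a) :
    StrictMonoOn (fun i => lexKey (a ∘ T.entry) τ (T.cellOf i)) (Set.Icc 1 lam.sum) := by
  refine strictMonoOn_of_lt_add_one Set.ordConnected_Icc fun i _ hi hi1 => ?_
  simp only [lexKey, Function.comp_apply, T.entry_cellOf hi, T.entry_cellOf hi1]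
  refine Prod.Lex.toLex_lt_toLex'.mpr ⟨ha.le_succ i hi.1 hi1.2, fun h => ?_⟩
  have hne : T.cellOf i ≠ T.cellOf (i + 1) := T.cellOf_injOn.ne hi hi1 (by omega)
  refine (hτ.ne hne).lt_of_le (not_lt.mp fun hdrop => (ha.lt_succ i ?_).ne h)
  exact mem_filter.mpr ⟨mem_Icc.mpr ⟨hi.1, by have := hi1.2; omega⟩, hdrop⟩

theorem lexKey_lt_iff (hτ : Function.Injective τ) (T : SYT lam) {a : ℕ → ℕ}
    (ha : IsMonoSeq lam.sum t (T.drops τ) a) {p q : ℕ × ℕ} (hp : p ∈ ydCells lam)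
    (hq : q ∈ ydCells lam) :
    lexKey (a ∘ T.entry) τ p < lexKey (a ∘ T.entry) τ q ↔ T.entry p < T.entry q := by
  have := (T.strictMonoOn_lexKey_cellOf hτ ha).lt_iff_lt (T.entry_mem hp) (T.entry_mem hq)
  rwa [T.cellOf_entry hp, T.cellOf_entry hq] at this

theorem isFilling_comp_entry (hlam : IsLowerSet (ydCells lam : Set (ℕ × ℕ)))
    (hτ : Function.Injective τ) (T : SYT lam) {a : ℕ → ℕ}
    (ha : IsMonoSeq lam.sum t (T.drops τ) a) :
    IsFilling lam t (a ∘ T.entry) ∧ StrictMonoOn (lexKey (a ∘ T.entry) τ) (ydCells lam) :=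
  ⟨⟨fun p hp => by simp [T.zero_outside p hp, ha.eq_zero 0],
      fun p hp => ha.apply_mem _ (T.entry_mem hp)⟩,
    fun p hp q hq hpq => (T.lexKey_lt_iff hτ ha hp hq).mpr (T.strictMonoOn_entry hlam hp hq hpq)⟩

end SYT

variable (lam τ t) in
/-- With `τ = toLex` these are the weakly increasing fillings, with the reverse order the
strictly increasing ones. -/
def TieFilling : Type :=
  {σ : ℕ × ℕ → ℕ // IsFilling lam t σ ∧ StrictMonoOn (lexKey σ τ) (ydCells lam)}

noncomputable def standardizeEquiv (hlam : IsLowerSet (ydCells lam : Set (ℕ × ℕ)))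
    (hτ : Function.Injective τ) :
    TieFilling lam τ t ≃ Σ T : SYT lam, {a // IsMonoSeq lam.sum t (T.drops τ) a} where
  toFun σ := ⟨SYT.standardize hτ σ.2.2, _, SYT.isMonoSeq_seqOf hτ σ.2.1 σ.2.2⟩
  invFun Ta := ⟨_, Ta.1.isFilling_comp_entry hlam hτ Ta.2.2⟩
  left_inv σ := Subtype.ext <| funext fun p => by
    by_cases hp : p ∈ ydCells lam
    · simp [SYT.seqOf, SYT.entry_mem _ hp, SYT.cellOf_entry _ hp]
    · simp [SYT.seqOf, SYT.zero_outside _ p hp, σ.2.1.eq_zero p hp]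
  right_inv := fun ⟨T, a, ha⟩ => by
    have hT : SYT.standardize hτ (T.isFilling_comp_entry hlam hτ ha).2 = T :=
      SYT.ofKey_eq _ _ fun p hp q hq => T.lexKey_lt_iff hτ ha hp hq
    refine Sigma.subtype_ext hT (funext fun i => ?_)
    simp only [hT, SYT.seqOf]
    split_ifs with hi
    · simp [T.entry_cellOf hi]
    · exact (ha.eq_zero i hi).symm

end Standardization

section Counting

variable {lam : List ℕ}

theorem card_tieFilling {γ : Type*} [LinearOrder γ] {τ : ℕ × ℕ → γ}
    (hlam : IsLowerSet (ydCells lam : Set (ℕ × ℕ))) (hτ : Function.Injective τ) (t : ℕ) :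
    Nat.card (TieFilling lam τ t) = ∑ T : SYT lam, monoSeqCount lam.sum (t - #(T.drops τ)) := by
  rw [Nat.card_congr (standardizeEquiv hlam hτ), Nat.card_sigma]
  exact sum_congr rfl fun T _ => card_isMonoSeq (T.drops_subset τ) t

theorem card_monotone_fillings (hlam : IsLowerSet (ydCells lam : Set (ℕ × ℕ))) (t : ℕ) :
    Nat.card {σ // IsFilling lam t σ ∧ MonotoneOn σ (ydCells lam)} =
      ∑ T : SYT lam, monoSeqCount lam.sum (t - ascNum lam T) := by
  have hiff : ∀ σ : ℕ × ℕ → ℕ, IsFilling lam t σ ∧ StrictMonoOn (lexKey σ toLex) (ydCells lam) ↔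
      IsFilling lam t σ ∧ MonotoneOn σ (ydCells lam) := fun σ =>
    and_congr_right' (strictMonoOn_toLex_iff_monotoneOn (Prod.Lex.toLex_strictMono.strictMonoOn _))
  rw [← Nat.card_congr (Equiv.subtypeEquivRight hiff)]
  refine (card_tieFilling hlam toLex.injective t).trans (sum_congr rfl fun T _ => ?_)
  rw [T.drops_toLex hlam, ascNum]

theorem card_strictMono_fillings (hlam : IsLowerSet (ydCells lam : Set (ℕ × ℕ))) (t : ℕ) :
    Nat.card {σ // IsFilling lam t σ ∧ StrictMonoOn σ (ydCells lam)} =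
      ∑ T : SYT lam, monoSeqCount lam.sum (t - (lam.sum - 1 - ascNum lam T)) := by
  have hanti : Antitone fun p : ℕ × ℕ => OrderDual.toDual (toLex p) :=
    fun _ _ h => OrderDual.toDual_le_toDual.mpr (Prod.Lex.toLex_mono h)
  have hiff : ∀ σ : ℕ × ℕ → ℕ, IsFilling lam t σ ∧
      StrictMonoOn (lexKey σ fun p => OrderDual.toDual (toLex p)) (ydCells lam) ↔
      IsFilling lam t σ ∧ StrictMonoOn σ (ydCells lam) := fun σ =>
    and_congr_right' (strictMonoOn_toLex_iff_strictMonoOn (hanti.antitoneOn _))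
  rw [← Nat.card_congr (Equiv.subtypeEquivRight hiff)]
  refine (card_tieFilling (τ := fun p => OrderDual.toDual (toLex p)) hlam
    (OrderDual.toDual.injective.comp toLex.injective) t).trans
    (sum_congr rfl fun T _ => ?_)
  rw [T.drops_toDual_toLex hlam, card_sdiff_of_subset T.ascSet_subset, Nat.card_Icc,
    Nat.add_sub_cancel, ascNum]

end Counting

theorem StrictMonoOn.add_le_of_le {lam : List ℕ}
    (hlam : IsLowerSet (ydCells lam : Set (ℕ × ℕ))) {σ : ℕ × ℕ → ℕ}
    (hσ : StrictMonoOn σ (ydCells lam)) {p q : ℕ × ℕ} (hq : q ∈ ydCells lam) (hpq : p ≤ q) :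
    σ p + (q.1 + q.2 - (p.1 + p.2)) ≤ σ q := by
  induction hd : q.1 + q.2 - (p.1 + p.2) generalizing q with
  | zero =>
    have := hpq.1
    have := hpq.2
    obtain rfl : p = q := Prod.ext (by omega) (by omega)
    simp
  | succ d ih =>
    obtain ⟨q', hq'q, hpq', hd'⟩ : ∃ q', q' < q ∧ p ≤ q' ∧ q'.1 + q'.2 - (p.1 + p.2) = d := by
      rcases Nat.lt_or_ge p.1 q.1 with h | h
      · exact ⟨(q.1 - 1, q.2), Prod.mk_lt_mk_of_lt_of_le (by omega) le_rfl,
          ⟨by simp; omega, hpq.2⟩, by simp; omega⟩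
      · exact ⟨(q.1, q.2 - 1), Prod.mk_lt_mk_of_le_of_lt le_rfl (by omega),
          ⟨hpq.1, by simp; omega⟩, by simp; omega⟩
    have hq' : q' ∈ ydCells lam := hlam hq'q.le hq
    have := ih hq' hpq' hd'
    have := hσ hq' hq hq'q
    omega

section Rectangle

variable {k n : ℕ}

theorem ascNum_replicate_le (T : SYT (List.replicate k n)) :
    ascNum (List.replicate k n) T ≤ (k - 1) * (n - 1) := by
  have hlam := isLowerSet_ydCells_replicate k n
  calc ascNum (List.replicate k n) T ≤ #(range (k - 1) ×ˢ Icc 1 (n - 1)) := by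
        refine card_le_card_of_injOn (fun i => T.cellOf (i + 1)) (fun i hi => ?_)
          fun i hi j hj h => ?_
        · obtain ⟨hiI, hrow⟩ := T.mem_ascSet_iff.mp hi
          obtain ⟨hi', hi1⟩ := mem_Icc_of_mem_Icc_sub_one hiI
          have hcol := T.snd_cellOf_lt_of_mem_ascSet hlam hi
          have hc := T.cellOf_mem hi'
          have hc1 := T.cellOf_mem hi1
          simp only [ydCells_replicate, mem_product, mem_range] at hc hc1
          simp only [coe_product, coe_range, coe_Icc, Set.mem_prod, Set.mem_Iio, Set.mem_Icc]
          omega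
        · obtain ⟨hi', hi1⟩ := mem_Icc_of_mem_Icc_sub_one (T.mem_ascSet_iff.mp hi).1
          obtain ⟨hj', hj1⟩ := mem_Icc_of_mem_Icc_sub_one (T.mem_ascSet_iff.mp hj).1
          have := congrArg T.entry h
          simp only [T.entry_cellOf hi1, T.entry_cellOf hj1] at this
          omega
    _ = (k - 1) * (n - 1) := by simp

theorem IsFilling.replicate_bounds {t : ℕ} {σ : ℕ × ℕ → ℕ}
    (hσ : IsFilling (List.replicate k n) t σ)
    (hmono : StrictMonoOn σ (ydCells (List.replicate k n))) {p : ℕ × ℕ}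
    (hp : p ∈ ydCells (List.replicate k n)) :
    p.1 + p.2 + 1 ≤ σ p ∧ σ p + (k - 1 - p.1) + (n - 1 - p.2) ≤ t := by
  have hlam := isLowerSet_ydCells_replicate k n
  obtain ⟨r, c⟩ := p
  have hrc := hp
  simp only [ydCells_replicate, mem_product, mem_range] at hrc
  have hcorner : (k - 1, n - 1) ∈ ydCells (List.replicate k n) := by
    simp only [ydCells_replicate, mem_product, mem_range]; omega
  have h0r : (0, 0) ≤ (r, c) := Prod.mk_le_mk.mpr ⟨r.zero_le, c.zero_le⟩
  have h0 : (0, 0) ∈ ydCells (List.replicate k n) := hlam h0r hp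
  have hlow := hmono.add_le_of_le hlam hp h0r
  have hhigh := hmono.add_le_of_le hlam hcorner
    (Prod.mk_le_mk.mpr ⟨(by omega : r ≤ k - 1), (by omega : c ≤ n - 1)⟩)
  have := (hσ.apply_mem _ h0).1
  have := (hσ.apply_mem _ hcorner).2
  simp only at hlow hhigh ⊢
  omega

theorem IsFilling.sub_fst_add_snd {t : ℕ} {σ : ℕ × ℕ → ℕ}
    (hσ : IsFilling (List.replicate k n) (t + (k - 1) + (n - 1)) σ)
    (hmono : StrictMonoOn σ (ydCells (List.replicate k n))) :
    IsFilling (List.replicate k n) t (fun p => σ p - (p.1 + p.2)) ∧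
      MonotoneOn (fun p => σ p - (p.1 + p.2)) (ydCells (List.replicate k n)) := by
  refine ⟨⟨fun p hp => by simp [hσ.eq_zero p hp], fun p hp => ?_⟩, fun p hp q hq hpq => ?_⟩
  · have := hσ.replicate_bounds hmono hp
    constructor <;> omega
  · have := hσ.replicate_bounds hmono hp
    have := hmono.add_le_of_le (isLowerSet_ydCells_replicate k n) hq hpq
    have := hpq.1
    have := hpq.2
    simp only
    omega

theorem IsFilling.add_fst_add_snd {t : ℕ} {σ : ℕ × ℕ → ℕ}
    (hσ : IsFilling (List.replicate k n) t σ)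
    (hmono : MonotoneOn σ (ydCells (List.replicate k n))) :
    let σ' := fun p => if p ∈ ydCells (List.replicate k n) then σ p + (p.1 + p.2) else 0
    IsFilling (List.replicate k n) (t + (k - 1) + (n - 1)) σ' ∧
      StrictMonoOn σ' (ydCells (List.replicate k n)) := by
  refine ⟨⟨fun p hp => if_neg hp, fun p hp => ?_⟩, fun p hp q hq hpq => ?_⟩
  · have := hσ.apply_mem p hp
    have hp' := hp
    simp only [ydCells_replicate, mem_product, mem_range] at hp'
    simp only [if_pos hp, Set.mem_Icc] at this ⊢
    omega
  · have := hmono hp hq hpq.le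
    have := Prod.mk_lt_mk.mp hpq
    simp only [if_pos (Finset.mem_coe.mp hp), if_pos (Finset.mem_coe.mp hq)]
    omega

noncomputable def shiftEquiv (t : ℕ) :
    {σ // IsFilling (List.replicate k n) (t + (k - 1) + (n - 1)) σ ∧
      StrictMonoOn σ (ydCells (List.replicate k n))} ≃
    {σ // IsFilling (List.replicate k n) t σ ∧ MonotoneOn σ (ydCells (List.replicate k n))} where
  toFun σ := ⟨_, σ.2.1.sub_fst_add_snd σ.2.2⟩
  invFun σ := ⟨_, σ.2.1.add_fst_add_snd σ.2.2⟩
  left_inv σ := Subtype.ext <| funext fun p => by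
    by_cases hp : p ∈ ydCells (List.replicate k n)
    · have := σ.2.1.replicate_bounds σ.2.2 hp
      simp only [if_pos hp]
      omega
    · simp only [if_neg hp, σ.2.1.eq_zero p hp]
  right_inv σ := Subtype.ext <| funext fun p => by
    by_cases hp : p ∈ ydCells (List.replicate k n)
    · simp only [if_pos hp, Nat.add_sub_cancel]
    · simp only [if_neg hp, σ.2.1.eq_zero p hp, Nat.zero_sub]

theorem sum_monoSeqCount_ascNum_eq (hk : 1 ≤ k) (hn : 1 ≤ n) (t : ℕ) :
    ∑ T : SYT (List.replicate k n), monoSeqCount (k * n) (t - ascNum _ T) =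
      ∑ T : SYT (List.replicate k n),
        monoSeqCount (k * n) (t - ((k - 1) * (n - 1) - ascNum _ T)) := by
  have hsum : (List.replicate k n).sum = k * n := by simp
  have hlam := isLowerSet_ydCells_replicate k n
  have hkn : k * n - 1 = (k - 1) * (n - 1) + (k - 1) + (n - 1) := by
    obtain ⟨k, rfl⟩ := Nat.exists_eq_add_of_le hk
    obtain ⟨n, rfl⟩ := Nat.exists_eq_add_of_le hn
    simp only [Nat.add_sub_cancel_left]
    ring_nf
    omega
  rw [← hsum, ← card_monotone_fillings hlam, ← Nat.card_congr (shiftEquiv t),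
    card_strictMono_fillings hlam, hsum]
  refine sum_congr rfl fun T _ => congrArg _ ?_
  have := ascNum_replicate_le T
  omega

end Rectangle

/-- Theorem: there is an involution on `SYT(n^k)` complementing the number of ascents
to `(k-1)(n-1)`. -/
theorem exists_involution_asc (k n : ℕ) (hk : 1 ≤ k) (hn : 1 ≤ n) :
    ∃ Ψ : SYT (List.replicate k n) → SYT (List.replicate k n),
      (∀ T, Ψ (Ψ T) = T) ∧
      (∀ T, ascNum (List.replicate k n) T + ascNum (List.replicate k n) (Ψ T) =
        (k - 1) * (n - 1)) :=
  exists_involutive_add_eq ascNum_replicate_le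
    (card_fiber_eq_of_forall_sum_eq (monoSeqCount_zero (Nat.mul_pos hk hn))
      (monoSeqCount_one _) (sum_monoSeqCount_ascNum_eq hk hn))
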